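/- Let p be the law of a Markov chain of order m (1 ≤ m ≤ T) on S^T. For any path s^T of positive probability and any integer k with m ≤ k ≤ T, R̄_k(s^T) = R̄_m(s^T) + (k-m)·R̄_∞(s^T), where R̄_k(s^T) := -(1/T) log ∏_{j=1-k}^{T-1} p(s_{(j+1)∨1}^{(j+k)∧T}) and R̄_∞(s^T) := -(1/T) log p(s^T). -/

import Mathlib

/-!
For an order-`m` chain, extending a window of length at least `m` by one site multiplies its
probability by a transition probability `c t`. Split `Ū_{j+1}` into the prefixes `s_1^i`
(`i ≤ j`), the full windows of length `j + 1` and the suffixes `s_i^T` (`i > T - j`). Compared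
with `Ū_j`, it gains the prefix `s_1^j` and the suffix `s_{T-j+1}^T`, loses the full window
`s_{T-j+1}^T`, and every remaining full window gains the transition probability at its right
end; together with the prefix `s_1^j` these transitions make up `p(s^T)`. Hence
`Ū_{j+1} = Ū_j · p(s^T)` for `m ≤ j < T`, so `Ū_k = Ū_m · p(s^T)^(k-m)`, and taking
`-(1/T) log` gives the claim.
-/

open Finset

section CommMonoid

variable {M : Type*} [CommMonoid M]

structure MarkovFactorization (m : ℕ) (base : ℕ → ℕ → M) (c : ℕ → M) (win : ℕ → ℕ → M) :
    Prop where
  short : ∀ a n, a ≤ n → n < a + m → win a n = base a n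
  long : ∀ a n, a + m ≤ n →
    win a n = base a (a + m - 1) * ∏ t ∈ Icc (a + m) n, c t

variable {m : ℕ} {base : ℕ → ℕ → M} {c : ℕ → M} {win : ℕ → ℕ → M}

namespace MarkovFactorization

theorem eq_mul_prod_of_add_le_succ (hp : MarkovFactorization m base c win) (hm : 1 ≤ m)
    {a n : ℕ} (h : a + m ≤ n + 1) :
    win a n = base a (a + m - 1) * ∏ t ∈ Icc (a + m) n, c t := by
  rcases Nat.lt_or_ge n (a + m) with hn | hn
  · rw [hp.short a n (by omega) hn, Icc_eq_empty (by omega), prod_empty, mul_one,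
      show a + m - 1 = n by omega]
  · exact hp.long a n hn

theorem succ_eq_mul (hp : MarkovFactorization m base c win) (hm : 1 ≤ m)
    {a n : ℕ} (h : a + m ≤ n + 1) :
    win a (n + 1) = win a n * c (n + 1) := by
  rw [hp.long a (n + 1) h, hp.eq_mul_prod_of_add_le_succ hm h, prod_Icc_succ_top h,
    mul_assoc]

theorem add_eq_mul_prod (hp : MarkovFactorization m base c win) (hm : 1 ≤ m)
    {a n : ℕ} (h : a + m ≤ n + 1) (d : ℕ) :
    win a (n + d) = win a n * ∏ i ∈ range d, c (n + 1 + i) := by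
  induction d with
  | zero => simp
  | succ d ih =>
    rw [← add_assoc, hp.succ_eq_mul hm (by omega), ih, prod_range_succ, mul_assoc,
      add_right_comm n 1 d]

end MarkovFactorization

def windowProd (T : ℕ) (win : ℕ → ℕ → M) (j : ℕ) : M :=
  ∏ i ∈ range (T + j - 1), win (max 1 (i + 2 - j)) (min T (i + 1))

theorem windowProd_succ_eq {T j : ℕ} (hjT : j ≤ T) :
    windowProd T win (j + 1) = (∏ i ∈ range j, win 1 (i + 1)) *
      (∏ i ∈ range (T - j), win (i + 1) (i + j + 1)) * ∏ i ∈ range j, win (T - j + 1 + i) T := by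
  rw [windowProd, show T + (j + 1) - 1 = j + (T - j) + j by omega, prod_range_add,
    prod_range_add]
  refine congr_arg₂ (· * ·) (congr_arg₂ (· * ·) ?_ ?_) ?_ <;>
    refine prod_congr rfl fun i hi => ?_ <;> rw [mem_range] at hi <;> congr 1 <;> omega

theorem windowProd_succ (hp : MarkovFactorization m base c win) (hm : 1 ≤ m) {T j : ℕ}
    (hj : m ≤ j + 1) (hjT : j + 1 < T) :
    windowProd T win (j + 2) = windowProd T win (j + 1) * win 1 T := by
  have prefixes : ∏ i ∈ range (j + 1), win 1 (i + 1) =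
      (∏ i ∈ range j, win 1 (i + 1)) * win 1 (j + 1) :=
    prod_range_succ _ _
  have suffixes : ∏ i ∈ range (j + 1), win (T - (j + 1) + 1 + i) T =
      win (T - j) T * ∏ i ∈ range j, win (T - j + 1 + i) T := by
    rw [prod_range_succ', mul_comm]
    congr 1
    · congr 1; omega
    · exact prod_congr rfl fun i _ => by congr 1; omega
  have full_windows : ∏ i ∈ range (T - j), win (i + 1) (i + j + 1) =
      (∏ i ∈ range (T - (j + 1)), win (i + 1) (i + j + 1)) * win (T - j) T := by
    rw [show T - j = T - (j + 1) + 1 by omega, prod_range_succ]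
    congr 2; omega
  have longer_windows : ∏ i ∈ range (T - (j + 1)), win (i + 1) (i + (j + 1) + 1) =
      (∏ i ∈ range (T - (j + 1)), win (i + 1) (i + j + 1)) *
        ∏ i ∈ range (T - (j + 1)), c (j + 1 + 1 + i) := by
    rw [← prod_mul_distrib]
    refine prod_congr rfl fun i _ => ?_
    rw [← add_assoc, hp.succ_eq_mul hm (by omega)]
    congr 2; omega
  have whole_path :
      win 1 T = win 1 (j + 1) * ∏ i ∈ range (T - (j + 1)), c (j + 1 + 1 + i) := by
    rw [← hp.add_eq_mul_prod hm (by omega), show j + 1 + (T - (j + 1)) = T by omega]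
  rw [show j + 2 = j + 1 + 1 from rfl, windowProd_succ_eq (j := j + 1) hjT.le,
    windowProd_succ_eq (j := j) (by omega), prefixes, suffixes,
    full_windows, longer_windows, whole_path]
  ac_rfl

theorem windowProd_eq_mul_pow (hp : MarkovFactorization m base c win) (hm : 1 ≤ m) {T k : ℕ}
    (hmk : m ≤ k) (hkT : k ≤ T) :
    windowProd T win k = windowProd T win m * win 1 T ^ (k - m) := by
  induction k, hmk using Nat.le_induction with
  | base => simp
  | succ k hmk ih =>
    obtain ⟨j, rfl⟩ : ∃ j, k = j + 1 := ⟨k - 1, by omega⟩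
    rw [windowProd_succ hp hm hmk hkT, ih (by omega),
      show j + 1 + 1 - m = j + 1 - m + 1 by omega, pow_succ, mul_assoc]

end CommMonoid

theorem MarkovFactorization.pos {m : ℕ} {base : ℕ → ℕ → ℝ} {c : ℕ → ℝ} {win : ℕ → ℕ → ℝ}
    (hp : MarkovFactorization m base c win) (hm : 1 ≤ m) {T : ℕ}
    (hbase : ∀ a n, 1 ≤ a → a ≤ n → n ≤ T → 0 < base a n)
    (hc : ∀ t, 1 ≤ t → t ≤ T → 0 < c t) {a n : ℕ} (ha : 1 ≤ a) (han : a ≤ n) (hnT : n ≤ T) :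
    0 < win a n := by
  rcases Nat.lt_or_ge n (a + m) with hn | hn
  · rw [hp.short a n han hn]
    exact hbase a n ha han hnT
  · rw [hp.long a n hn]
    refine mul_pos (hbase a _ ha (by omega) (by omega)) (prod_pos fun t ht => ?_)
    rw [mem_Icc] at ht
    exact hc t (by omega) (by omega)

theorem windowProd_pos {m : ℕ} {base : ℕ → ℕ → ℝ} {c : ℕ → ℝ} {win : ℕ → ℕ → ℝ}
    (hp : MarkovFactorization m base c win) (hm : 1 ≤ m) {T : ℕ}
    (hbase : ∀ a n, 1 ≤ a → a ≤ n → n ≤ T → 0 < base a n)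
    (hc : ∀ t, 1 ≤ t → t ≤ T → 0 < c t) (hT : 1 ≤ T) {j : ℕ} (hj : 1 ≤ j) :
    0 < windowProd T win j :=
  prod_pos fun i hi => by
    rw [mem_range] at hi
    exact hp.pos hm hbase hc (by omega) (by omega) (by omega)

theorem stmt7_general (T m k : ℕ) (hT : 1 ≤ T) (hm : 1 ≤ m) (hmk : m ≤ k)
    (hkT : k ≤ T)
    -- `base a n` is the probability `p(s_a^n)` of a short window (length ≤ m) of the
    -- fixed path `s`; `c t` is the conditional probability `p(s_t | s_{t-m}^{t-1})`.
    (base : ℕ → ℕ → ℝ) (c : ℕ → ℝ)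
    -- `win a n` is the window probability `p(s_a^n)`, factored via the order-`m`
    -- Markov property.
    (win : ℕ → ℕ → ℝ)
    (hwin_short : ∀ a n, a ≤ n → n < a + m → win a n = base a n)
    (hwin_long : ∀ a n, a + m ≤ n →
      win a n = base a (a + m - 1) * ∏ t ∈ Finset.Icc (a + m) n, c t)
    -- positivity (the path has positive probability)
    (hbase : ∀ a n, 1 ≤ a → a ≤ n → n ≤ T → 0 < base a n)
    (hc : ∀ t, 1 ≤ t → t ≤ T → 0 < c t)
    -- `U j = Ū_j(s^T)` is the product of the length-`j` window probabilities
    -- (reindexed by `i = j' - (1 - j)`)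
    (U : ℕ → ℝ)
    (hU : ∀ j, U j = ∏ i ∈ Finset.range (T + j - 1), win (max 1 (i + 2 - j)) (min T (i + 1)))
    (Rbar : ℕ → ℝ) (hRbar : ∀ j, Rbar j = -(1 / (T : ℝ)) * Real.log (U j))
    (Rinf : ℝ) (hRinf : Rinf = -(1 / (T : ℝ)) * Real.log (win 1 T)) :
    Rbar k = Rbar m + ((k : ℝ) - (m : ℝ)) * Rinf := by
  have hp : MarkovFactorization m base c win := ⟨hwin_short, hwin_long⟩
  have hU : U = windowProd T win := funext hU
  have hUm : 0 < windowProd T win m := windowProd_pos hp hm hbase hc hT hm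
  have hpath : 0 < win 1 T := hp.pos hm hbase hc le_rfl hT le_rfl
  rw [hRbar, hRbar, hRinf, hU, windowProd_eq_mul_pow hp hm hmk hkT,
    Real.log_mul hUm.ne' (pow_ne_zero _ hpath.ne'), Real.log_pow, Nat.cast_sub hmk]
  ring

/-- Let `p` be the law of a Markov chain of order `m` (`1 ≤ m ≤ T`) on
`S^T`, so a window probability `p(s_a^n)` factors as the probability of the first `m`
coordinates of the window times the conditional probabilities `c t = p(s_t | s_{t-m}^{t-1})`
for the remaining coordinates. For any path of positive probability and any `m ≤ k ≤ T`,
`R̄_k(s^T) = R̄_m(s^T) + (k-m)·R̄_∞(s^T)`, where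
`R̄_j(s^T) := -(1/T) log ∏_{j'=1-j}^{T-1} p(s_{(j'+1)∨1}^{(j'+j)∧T})` and
`R̄_∞(s^T) := -(1/T) log p(s^T)`. -/
theorem stmt7 (T m k : ℕ) (hT : 1 ≤ T) (hm : 1 ≤ m) (hmT : m ≤ T) (hmk : m ≤ k)
    (hkT : k ≤ T)
    -- `base a n` is the probability `p(s_a^n)` of a short window (length ≤ m) of the
    -- fixed path `s`; `c t` is the conditional probability `p(s_t | s_{t-m}^{t-1})`.
    (base : ℕ → ℕ → ℝ) (c : ℕ → ℝ)
    -- `win a n` is the window probability `p(s_a^n)`, factored via the order-`m`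
    -- Markov property.
    (win : ℕ → ℕ → ℝ)
    (hwin_short : ∀ a n, a ≤ n → n < a + m → win a n = base a n)
    (hwin_long : ∀ a n, a + m ≤ n →
      win a n = base a (a + m - 1) * ∏ t ∈ Finset.Icc (a + m) n, c t)
    -- positivity (the path has positive probability)
    (hbase : ∀ a n, 1 ≤ a → a ≤ n → n ≤ T → 0 < base a n)
    (hc : ∀ t, 1 ≤ t → t ≤ T → 0 < c t)
    -- `U j = Ū_j(s^T)` is the product of the length-`j` window probabilities
    -- (reindexed by `i = j' - (1 - j)`)
    (U : ℕ → ℝ)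
    (hU : ∀ j, U j = ∏ i ∈ Finset.range (T + j - 1), win (max 1 (i + 2 - j)) (min T (i + 1)))
    (Rbar : ℕ → ℝ) (hRbar : ∀ j, Rbar j = -(1 / (T : ℝ)) * Real.log (U j))
    (Rinf : ℝ) (hRinf : Rinf = -(1 / (T : ℝ)) * Real.log (win 1 T)) :
    Rbar k = Rbar m + ((k : ℝ) - (m : ℝ)) * Rinf :=
  stmt7_general T m k hT hm hmk hkT base c win hwin_short hwin_long hbase hc U hU Rbar hRbar Rinf
    hRinf
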